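/- arXiv:1106.3905 — 4 statements merged into one kernel-verified Lean document; each statement's English description precedes it below -/
import Mathlib

section
/- Let Λ be a compact invariant set of a C¹ vector field X with a dominated splitting T_Λ M = E ⊕ F with respect to the tangent flow. If x ∈ Λ is a regular point (X(x) ≠ 0) such that there exist times t_n → ∞ with φ_{t_n}(x) → x, and X(x) ∉ E(x), then X(x) ∈ F(x). -/
open Set Metric Filter Module

/-- A continuous flow on a metric space. -/
def IsFlow {M : Type*} [MetricSpace M] (φ : ℝ → M → M) : Prop :=
  Continuous (fun p : ℝ × M => φ p.1 p.2) ∧ (∀ x, φ 0 x = x) ∧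
    ∀ s t x, φ (s + t) x = φ s (φ t x)

variable {M : Type*} [MetricSpace M]
variable {V : Type*} [NormedAddCommGroup V] [NormedSpace ℝ V]

/-- A linear cocycle over the flow `φ`, modelling the tangent flow `Φ_t`. -/
def IsCocycleOver (φ : ℝ → M → M) (A : ℝ → M → V →L[ℝ] V) : Prop :=
  (∀ x, A 0 x = ContinuousLinearMap.id ℝ V) ∧
    ∀ s t x, A (s + t) x = (A s (φ t x)).comp (A t x)

/-- Invariance of a subbundle `E` under the cocycle `A` over points of `Λ`. -/
def InvariantBundle (φ : ℝ → M → M) (A : ℝ → M → V →L[ℝ] V) (Λ : Set M)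
    (E : M → Submodule ℝ V) : Prop :=
  ∀ x ∈ Λ, ∀ t : ℝ, ∀ v ∈ E x, A t x v ∈ E (φ t x)

/-- A dominated splitting `E ⊕ F` over `Λ` for the cocycle `A` over the flow `φ`:
the bundles are complementary, invariant, and satisfy
`‖Φ_t|_{E(x)}‖ · ‖Φ_{−t}|_{F(φ_t(x))}‖ ≤ C e^{−λ t}` (in ratio form). -/
def DominatedOn (φ : ℝ → M → M) (A : ℝ → M → V →L[ℝ] V) (Λ : Set M)
    (E F : M → Submodule ℝ V) : Prop :=
  (∀ x ∈ Λ, E x ⊓ F x = ⊥ ∧ E x ⊔ F x = ⊤) ∧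
    InvariantBundle φ A Λ E ∧ InvariantBundle φ A Λ F ∧
    ∃ C > 0, ∃ lam > 0, ∀ x ∈ Λ, ∀ t > 0, ∀ u ∈ E x, ∀ v ∈ F x,
      ‖A t x u‖ * ‖v‖ ≤ C * Real.exp (-lam * t) * (‖u‖ * ‖A t x v‖)

private lemma tendsto_Cexp (C lam : ℝ) (hlam : 0 < lam) :
    Tendsto (fun τ : ℝ => C * Real.exp (-lam * τ)) atTop (nhds 0) := by
  have h1 : Tendsto (fun τ : ℝ => lam * τ) atTop atTop :=
    Tendsto.const_mul_atTop hlam tendsto_id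
  have h2 : Tendsto (fun τ : ℝ => -(lam * τ)) atTop atBot := tendsto_neg_atBot_iff.2 h1
  have h3 : Tendsto (fun τ : ℝ => Real.exp (-(lam * τ))) atTop (nhds 0) :=
    Real.tendsto_exp_atBot.comp h2
  have h4 := h3.const_mul C
  simpa [neg_mul] using h4

set_option maxHeartbeats 1600000 in
/-- Flow-direction lemma: on a compact invariant set with a dominated splitting `E ⊕ F`,
if a regular point `x` is recurrent (there are `tₙ → ∞` with `φ_{tₙ}(x) → x`) and
`X(x) ∉ E(x)`, then `X(x) ∈ F(x)`. -/
theorem flow_direction_in_F [FiniteDimensional ℝ V]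
    (φ : ℝ → M → M) (hφ : IsFlow φ) (A : ℝ → M → V →L[ℝ] V)
    (hA : IsCocycleOver φ A) (hAc : Continuous fun p : ℝ × M => A p.1 p.2)
    (X : M → V) (hXc : Continuous X)
    (hXinv : ∀ (x : M) (t : ℝ), A t x (X x) = X (φ t x))
    (Λ : Set M) (hΛc : IsCompact Λ) (hΛi : ∀ t : ℝ, φ t '' Λ = Λ)
    (E F : M → Submodule ℝ V) (hEF : DominatedOn φ A Λ E F)
    (x : M) (hx : x ∈ Λ) (hreg : X x ≠ 0)
    (tn : ℕ → ℝ) (htn : Tendsto tn atTop atTop)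
    (hrec : Tendsto (fun n => φ (tn n) x) atTop (nhds x))
    (hnotE : X x ∉ E x) :
    X x ∈ F x := by
  obtain ⟨hA0, hAcoc⟩ := hA
  obtain ⟨hsplit, hEinv, hFinv, C, hC, lam, hlam, hdom⟩ := hEF
  -- basic facts
  have hΛmem : ∀ z ∈ Λ, ∀ t : ℝ, φ t z ∈ Λ := by
    intro z hz t; rw [← hΛi t]; exact ⟨z, hz, rfl⟩
  have hinv1 : ∀ (t : ℝ) (z : M) (w : V), A (-t) (φ t z) (A t z w) = w := by
    intro t z w
    have h := hAcoc (-t) t z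
    rw [show -t + t = 0 by ring, hA0] at h
    simpa using (ContinuousLinearMap.ext_iff.1 h w).symm
  have hinv2 : ∀ (t : ℝ) (z : M) (w : V), A t (φ (-t) z) (A (-t) z w) = w := by
    intro t z w
    have h := hAcoc t (-t) z
    rw [show t + -t = 0 by ring, hA0] at h
    simpa using (ContinuousLinearMap.ext_iff.1 h w).symm
  have hAnz : ∀ (t : ℝ) (z : M) (w : V), w ≠ 0 → A t z w ≠ 0 := by
    intro t z w hw h0
    apply hw
    have := hinv1 t z w
    rw [h0] at this
    simpa using this.symm
  -- decomposition of X x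
  obtain ⟨hinfx, hsupx⟩ := hsplit x hx
  have hwmem : X x ∈ E x ⊔ F x := by rw [hsupx]; trivial
  rw [Submodule.mem_sup] at hwmem
  obtain ⟨u, hu, v, hv, huv⟩ := hwmem
  have hvne : v ≠ 0 := by
    rintro rfl
    apply hnotE
    rw [← huv, add_zero]
    exact hu
  rcases eq_or_ne u 0 with rfl | hune
  · rw [← huv, zero_add]; exact hv
  exfalso
  have hupos : 0 < ‖u‖ := norm_pos_iff.2 hune
  have hvpos : 0 < ‖v‖ := norm_pos_iff.2 hvne
  -- sequences
  set y : ℕ → M := fun n => φ (tn n) x with hy_def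
  have hyΛ : ∀ n, y n ∈ Λ := fun n => hΛmem x hx _
  have hyx : Tendsto y atTop (nhds x) := hrec
  set Un : ℕ → V := fun n => A (tn n) x u with hUn_def
  set Vn : ℕ → V := fun n => A (tn n) x v with hVn_def
  have hUmem : ∀ n, Un n ∈ E (y n) := fun n => hEinv x hx _ u hu
  have hVmem : ∀ n, Vn n ∈ F (y n) := fun n => hFinv x hx _ v hv
  have hUVn : ∀ n, Un n + Vn n = X (y n) := by
    intro n
    show A (tn n) x u + A (tn n) x v = X (y n)
    rw [← map_add, huv, hXinv]
  have hXyto : Tendsto (fun n => X (y n)) atTop (nhds (X x)) := (hXc.tendsto x).comp hyx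
  -- convergence of the components
  have hexpN : Tendsto (fun n => C * Real.exp (-lam * tn n)) atTop (nhds 0) :=
    (tendsto_Cexp C lam hlam).comp htn
  have hUn0 : Tendsto Un atTop (nhds 0) := by
    have hub : ∀ᶠ n in atTop, ‖Un n‖ ≤
        2 * (C * Real.exp (-lam * tn n)) * ‖u‖ * (‖X x‖ + 1) / ‖v‖ := by
      filter_upwards [htn.eventually_gt_atTop 0,
        hexpN.eventually_le_const (show (0:ℝ) < ‖v‖ / (2 * ‖u‖ + 1) by positivity),
        hXyto.norm.eventually_le_const (lt_add_one ‖X x‖)] with n hpos hsmall hXb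
      have hd := hdom x hx (tn n) hpos u hu v hv
      have hVb : ‖Vn n‖ ≤ (‖X x‖ + 1) + ‖Un n‖ := by
        have h1 : Vn n = X (y n) - Un n := by rw [← hUVn n]; abel
        calc ‖Vn n‖ = ‖X (y n) - Un n‖ := by rw [h1]
          _ ≤ ‖X (y n)‖ + ‖Un n‖ := norm_sub_le _ _
          _ ≤ (‖X x‖ + 1) + ‖Un n‖ := by linarith
      have hepos : 0 < C * Real.exp (-lam * tn n) := by positivity
      have hsmall' : C * Real.exp (-lam * tn n) * (2 * ‖u‖ + 1) ≤ ‖v‖ :=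
        (le_div_iff₀ (by positivity)).1 hsmall
      rw [le_div_iff₀ hvpos]
      -- nonlinear arithmetic
      nlinarith [mul_le_mul_of_nonneg_left hsmall' (norm_nonneg (Un n)),
        mul_le_mul_of_nonneg_left hVb (le_of_lt (mul_pos hepos hupos)),
        mul_nonneg hepos.le (norm_nonneg (Un n)), norm_nonneg (Un n),
        norm_nonneg (X x)]
    have hb0 : Tendsto (fun n => 2 * (C * Real.exp (-lam * tn n)) * ‖u‖ * (‖X x‖ + 1) / ‖v‖)
        atTop (nhds 0) := by
      have := (((hexpN.const_mul 2).mul_const ‖u‖).mul_const (‖X x‖ + 1)).div_const ‖v‖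
      simpa using this
    have := squeeze_zero' (Eventually.of_forall fun n => norm_nonneg (Un n)) hub hb0
    exact tendsto_zero_iff_norm_tendsto_zero.2 this
  have hVnw : Tendsto Vn atTop (nhds (X x)) := by
    have h1 : Vn = fun n => X (y n) - Un n := funext fun n => by rw [← hUVn n]; abel
    rw [h1]
    simpa using hXyto.sub hUn0
  -- backward domination against u  (claim B)
  have hB : ∀ f ∈ F x, ∀ τ : ℝ, 0 < τ →
      ‖u‖ * ‖A (-τ) x f‖ ≤ C * Real.exp (-lam * τ) * (‖A (-τ) x u‖ * ‖f‖) := by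
    intro f hf τ hτ
    have hzΛ : φ (-τ) x ∈ Λ := hΛmem x hx _
    have hu' : A (-τ) x u ∈ E (φ (-τ) x) := hEinv x hx _ u hu
    have hf' : A (-τ) x f ∈ F (φ (-τ) x) := hFinv x hx _ f hf
    have hd := hdom _ hzΛ τ hτ _ hu' _ hf'
    rwa [hinv2 τ x u, hinv2 τ x f] at hd
  -- claim C : backward, the flow direction is comparable to its E part
  have hCw : ∀ τ : ℝ, 0 < τ → C * Real.exp (-lam * τ) * ‖v‖ ≤ ‖u‖ / 2 →
      ‖A (-τ) x u‖ ≤ 2 * ‖A (-τ) x (X x)‖ := by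
    intro τ hτ hsmall
    have hb := hB v hv τ hτ
    have h3 : ‖u‖ * ‖A (-τ) x v‖ ≤ ‖u‖ * (‖A (-τ) x u‖ / 2) := by
      nlinarith [mul_le_mul_of_nonneg_right hsmall (norm_nonneg (A (-τ) x u))]
    have hnv : ‖A (-τ) x v‖ ≤ ‖A (-τ) x u‖ / 2 := le_of_mul_le_mul_left h3 hupos
    have hw : A (-τ) x (X x) = A (-τ) x u + A (-τ) x v := by rw [← map_add, huv]
    have h4 : ‖A (-τ) x u‖ ≤ ‖A (-τ) x (X x)‖ + ‖A (-τ) x v‖ := by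
      have h5 : A (-τ) x u = A (-τ) x (X x) - A (-τ) x v := by rw [hw]; abel
      rw [h5]; exact norm_sub_le _ _
    linarith
  -- choose T for the angle estimate
  obtain ⟨T, hT0, hTle⟩ : ∃ T : ℝ, 0 < T ∧ C * Real.exp (-lam * T) ≤ 1 / 2 := by
    have h := ((tendsto_Cexp C lam hlam).eventually_le_const
      (show (0:ℝ) < 1/2 by norm_num)).and (eventually_gt_atTop 0)
    obtain ⟨T, h1, h2⟩ := h.exists
    exact ⟨T, h2, h1⟩
  -- uniform bounds for the cocycle at times T and -T on Λ
  obtain ⟨K₀, hK₀⟩ := hΛc.exists_bound_of_continuousOn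
    ((hAc.comp (continuous_const.prodMk continuous_id)).continuousOn :
      ContinuousOn (fun z : M => A T z) Λ)
  obtain ⟨K₁, hK₁⟩ := hΛc.exists_bound_of_continuousOn
    ((hAc.comp (continuous_const.prodMk continuous_id)).continuousOn :
      ContinuousOn (fun z : M => A (-T) z) Λ)
  set K := max K₀ 1 with hK_def
  set K' := max K₁ 1 with hK'_def
  have hK : ∀ z ∈ Λ, ‖A T z‖ ≤ K := fun z hz => (hK₀ z hz).trans (le_max_left _ _)
  have hK' : ∀ z ∈ Λ, ‖A (-T) z‖ ≤ K' := fun z hz => (hK₁ z hz).trans (le_max_left _ _)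
  have hK1 : (1:ℝ) ≤ K := le_max_right _ _
  have hK'1 : (1:ℝ) ≤ K' := le_max_right _ _
  have hKpos : (0:ℝ) < K := lt_of_lt_of_le one_pos hK1
  have hK'pos : (0:ℝ) < K' := lt_of_lt_of_le one_pos hK'1
  set δ : ℝ := 1 / (2 * K * K') with hδ_def
  have hδpos : 0 < δ := by positivity
  have hδ1 : δ ≤ 1 := by
    rw [hδ_def, div_le_one (by positivity)]
    nlinarith
  -- core angle estimate
  have hcore : ∀ z ∈ Λ, ∀ e ∈ E z, ∀ g ∈ F z, ‖g‖ = ‖e‖ → δ * ‖e‖ ≤ ‖e + g‖ := by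
    intro z hz e he g hg hge
    rcases eq_or_ne e 0 with rfl | hene
    · simp
    have hnepos : 0 < ‖e‖ := norm_pos_iff.2 hene
    have hd := hdom z hz T hT0 e he g hg
    rw [hge] at hd
    have hstep1 : ‖A T z e‖ ≤ ‖A T z g‖ / 2 := by
      have h1 : ‖A T z e‖ * ‖e‖ ≤ ‖A T z g‖ / 2 * ‖e‖ := by
        nlinarith [mul_le_mul_of_nonneg_right hTle
          (mul_nonneg (norm_nonneg e) (norm_nonneg (A T z g)))]
      exact le_of_mul_le_mul_right h1 hnepos
    have hstep2 : ‖g‖ ≤ K' * ‖A T z g‖ := by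
      calc ‖g‖ = ‖A (-T) (φ T z) (A T z g)‖ := by rw [hinv1]
        _ ≤ ‖A (-T) (φ T z)‖ * ‖A T z g‖ := ContinuousLinearMap.le_opNorm _ _
        _ ≤ K' * ‖A T z g‖ :=
          mul_le_mul_of_nonneg_right (hK' _ (hΛmem z hz T)) (norm_nonneg _)
    have hstep3 : ‖A T z (e + g)‖ ≤ K * ‖e + g‖ :=
      (ContinuousLinearMap.le_opNorm _ _).trans
        (mul_le_mul_of_nonneg_right (hK z hz) (norm_nonneg _))
    have hstep4 : ‖A T z g‖ ≤ ‖A T z (e + g)‖ + ‖A T z e‖ := by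
      have h6 : A T z g = A T z (e + g) - A T z e := by rw [map_add]; abel
      rw [h6]; exact norm_sub_le _ _
    have hfin : ‖e‖ ≤ 2 * K * K' * ‖e + g‖ := by
      have h7 : ‖A T z g‖ ≤ 2 * K * ‖e + g‖ := by linarith
      have h8 := mul_le_mul_of_nonneg_left h7 hK'pos.le
      rw [hge] at hstep2
      nlinarith [h8, hstep2]
    calc δ * ‖e‖ ≤ δ * (2 * K * K' * ‖e + g‖) :=
          mul_le_mul_of_nonneg_left hfin hδpos.le
      _ = ‖e + g‖ := by
          rw [hδ_def]; field_simp
  -- full angle estimate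
  have hang : ∀ z ∈ Λ, ∀ e ∈ E z, ∀ f ∈ F z, δ / 2 * ‖e‖ ≤ ‖e + f‖ := by
    intro z hz e he f hf
    by_cases hcase : δ / 2 * ‖e‖ ≤ |‖f‖ - ‖e‖|
    · have habs : |‖f‖ - ‖e‖| ≤ ‖e + f‖ := by
        have h := abs_norm_sub_norm_le f (-e)
        rw [sub_neg_eq_add, norm_neg] at h
        rw [show e + f = f + e by abel]
        exact h
      linarith
    · push_neg at hcase
      have hene : e ≠ 0 := by
        rintro rfl
        have h0 : δ / 2 * ‖(0:V)‖ = 0 := by simp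
        rw [h0] at hcase
        exact absurd hcase (abs_nonneg _).not_gt
      have hnepos : 0 < ‖e‖ := norm_pos_iff.2 hene
      have habs' := abs_lt.1 hcase
      have hfpos : 0 < ‖f‖ := by nlinarith
      set g := (‖e‖ / ‖f‖) • f with hg_def
      have hgF : g ∈ F z := Submodule.smul_mem _ _ hf
      have hgn : ‖g‖ = ‖e‖ := by
        rw [hg_def, norm_smul, Real.norm_eq_abs, abs_of_pos (by positivity),
          div_mul_cancel₀ _ hfpos.ne']
      have h1 : δ * ‖e‖ ≤ ‖e + g‖ := hcore z hz e he g hgF hgn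
      have h2 : ‖g - f‖ = |‖e‖ - ‖f‖| := by
        have h2a : g - f = ((‖e‖ - ‖f‖) / ‖f‖) • f := by
          rw [hg_def, sub_div, div_self hfpos.ne', sub_smul, one_smul]
        rw [h2a, norm_smul, Real.norm_eq_abs, abs_div, abs_of_pos hfpos,
          div_mul_cancel₀ _ hfpos.ne']
      have h3 : ‖e + g‖ ≤ ‖e + f‖ + ‖g - f‖ := by
        have h3a : e + g = (e + f) + (g - f) := by abel
        rw [h3a]; exact norm_add_le _ _
      have h4 : |‖e‖ - ‖f‖| = |‖f‖ - ‖e‖| := abs_sub_comm _ _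
      linarith
  -- complementarity at the points y n
  have hcompl : ∀ n, IsCompl (E (y n)) (F (y n)) := by
    intro n
    obtain ⟨h1, h2⟩ := hsplit (y n) (hyΛ n)
    exact ⟨disjoint_iff.2 h1, codisjoint_iff.2 h2⟩
  -- the projections onto E (y n) along F (y n)
  set P : ℕ → V →ₗ[ℝ] V :=
    fun n => (E (y n)).subtype ∘ₗ (E (y n)).linearProjOfIsCompl (F (y n)) (hcompl n) with hP_def
  set Qn : ℕ → V →L[ℝ] V := fun n => LinearMap.toContinuousLinearMap (P n) with hQn_def
  have hQapp : ∀ n (z : V), Qn n z =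
      ((E (y n)).linearProjOfIsCompl (F (y n)) (hcompl n) z : V) := fun n z => rfl
  have hQmem : ∀ n (z : V), Qn n z ∈ E (y n) := by
    intro n z
    rw [hQapp]
    exact Submodule.coe_mem _
  have hQrest : ∀ n (z : V), z - Qn n z ∈ F (y n) := by
    intro n z
    have h := Submodule.projection_add_projection_eq_self (hcompl n) z
    have h2 : z - Qn n z = ((F (y n)).linearProjOfIsCompl (E (y n)) (hcompl n).symm z : V) := by
      rw [hQapp]
      exact sub_eq_of_eq_add' h.symm
    rw [h2]
    exact Submodule.coe_mem _
  have hQid : ∀ n, ∀ e ∈ E (y n), Qn n e = e := by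
    intro n e he
    rw [hQapp]
    exact congrArg Subtype.val (Submodule.linearProjOfIsCompl_apply_left (hcompl n) ⟨e, he⟩)
  have hQnorm : ∀ n (z : V), ‖Qn n z‖ ≤ 2 / δ * ‖z‖ := by
    intro n z
    have h1 := hang (y n) (hyΛ n) _ (hQmem n z) _ (hQrest n z)
    have h2 : Qn n z + (z - Qn n z) = z := by abel
    rw [h2] at h1
    rw [div_mul_eq_mul_div, le_div_iff₀ hδpos]
    linarith
  have htrace : ∀ n, LinearMap.trace ℝ V (P n) = (finrank ℝ (E (y n)) : ℝ) := by
    intro n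
    have hproj : LinearMap.IsProj (E (y n)) (P n) :=
      ⟨fun z => Submodule.coe_mem _, fun z hz => hQid n z hz⟩
    exact hproj.trace
  -- ranks
  have hdimV : finrank ℝ (E x) + finrank ℝ (F x) = finrank ℝ V := by
    have h := Submodule.finrank_sup_add_finrank_inf_eq (E x) (F x)
    rw [hsupx, hinfx] at h
    simpa [finrank_top, finrank_bot] using h.symm
  have hranky : ∀ n, finrank ℝ (E (y n)) = finrank ℝ (E x) := by
    intro n
    have hinj : Function.Injective (A (tn n) x) := by
      intro a b hab
      have ha := hinv1 (tn n) x a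
      have hb := hinv1 (tn n) x b
      rw [← ha, ← hb, hab]
    have hinj' : Function.Injective ((A (tn n) x : V →ₗ[ℝ] V)) := hinj
    have hmapE : (E x).map (A (tn n) x : V →ₗ[ℝ] V) ≤ E (y n) := by
      rintro w ⟨a, ha, rfl⟩
      exact hEinv x hx _ a ha
    have hmapF : (F x).map (A (tn n) x : V →ₗ[ℝ] V) ≤ F (y n) := by
      rintro w ⟨a, ha, rfl⟩
      exact hFinv x hx _ a ha
    have hfE : finrank ℝ (E x) ≤ finrank ℝ (E (y n)) := by
      rw [(Submodule.equivMapOfInjective _ hinj' (E x)).finrank_eq]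
      exact Submodule.finrank_mono hmapE
    have hfF : finrank ℝ (F x) ≤ finrank ℝ (F (y n)) := by
      rw [(Submodule.equivMapOfInjective _ hinj' (F x)).finrank_eq]
      exact Submodule.finrank_mono hmapF
    have hsumn : finrank ℝ (E (y n)) + finrank ℝ (F (y n)) = finrank ℝ V := by
      have h := Submodule.finrank_sup_add_finrank_inf_eq (E (y n)) (F (y n))
      rw [(hsplit (y n) (hyΛ n)).2, (hsplit (y n) (hyΛ n)).1] at h
      simpa [finrank_top, finrank_bot] using h.symm
    omega
  -- extraction of a convergent subsequence of projections
  have hQball : ∀ n, Qn n ∈ Metric.closedBall (0 : V →L[ℝ] V) (2 / δ) := by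
    intro n
    rw [Metric.mem_closedBall, dist_zero_right]
    exact ContinuousLinearMap.opNorm_le_bound _ (by positivity) (hQnorm n)
  obtain ⟨Q, -, ψ, hψ, hQlim⟩ :=
    tendsto_subseq_of_bounded Metric.isBounded_closedBall hQball
  have happ : Continuous fun p : (V →L[ℝ] V) × V => p.1 p.2 :=
    isBoundedBilinearMap_apply.continuous
  have hcomp : Continuous fun p : (V →L[ℝ] V) × (V →L[ℝ] V) => p.1.comp p.2 :=
    isBoundedBilinearMap_comp.continuous
  have hQnidem : ∀ n, (Qn n).comp (Qn n) = Qn n := by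
    intro n
    ext z
    simp only [ContinuousLinearMap.comp_apply]
    exact hQid n _ (hQmem n z)
  have hQidem : Q.comp Q = Q := by
    have h1 : Tendsto (fun j => (Qn (ψ j)).comp (Qn (ψ j))) atTop (nhds (Q.comp Q)) :=
      (hcomp.tendsto (Q, Q)).comp (hQlim.prodMk_nhds hQlim)
    have h2 : (fun j => (Qn (ψ j)).comp (Qn (ψ j))) = fun j => Qn (ψ j) :=
      funext fun j => hQnidem (ψ j)
    rw [h2] at h1
    exact tendsto_nhds_unique h1 hQlim
  have htrQ : LinearMap.trace ℝ V (Q : V →ₗ[ℝ] V) = (finrank ℝ (E x) : ℝ) := by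
    have hcont : Continuous fun S : V →L[ℝ] V => LinearMap.trace ℝ V (S : V →ₗ[ℝ] V) :=
      ((LinearMap.trace ℝ V).comp (ContinuousLinearMap.coeLM ℝ)).continuous_of_finiteDimensional
    have h1 : Tendsto (fun j => LinearMap.trace ℝ V ((Qn (ψ j) : V →ₗ[ℝ] V))) atTop
        (nhds (LinearMap.trace ℝ V (Q : V →ₗ[ℝ] V))) := (hcont.tendsto Q).comp hQlim
    have h2 : (fun j => LinearMap.trace ℝ V ((Qn (ψ j) : V →ₗ[ℝ] V))) =
        fun _ => (finrank ℝ (E x) : ℝ) := by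
      funext j
      have h3 := htrace (ψ j)
      rw [hranky (ψ j)] at h3
      simpa [hQn_def, LinearMap.coe_toContinuousLinearMap] using h3
    rw [h2] at h1
    exact tendsto_nhds_unique h1 tendsto_const_nhds
  set W : Submodule ℝ V := LinearMap.range (Q : V →ₗ[ℝ] V) with hW_def
  have hQW : ∀ z : V, Q z ∈ W := fun z => LinearMap.mem_range_self _ z
  have hQfix : ∀ b ∈ W, Q b = b := by
    intro b hb
    obtain ⟨b₀, hb₀⟩ := LinearMap.mem_range.1 hb
    rw [← hb₀]
    have h1 := congrArg (fun f : V →L[ℝ] V => f b₀) hQidem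
    simpa using h1
  have hWrank : finrank ℝ W = finrank ℝ (E x) := by
    have hproj : LinearMap.IsProj W (Q : V →ₗ[ℝ] V) :=
      ⟨fun z => hQW z, fun z hz => hQfix z hz⟩
    have h := hproj.trace
    rw [htrQ] at h
    exact_mod_cast h.symm
  -- claim A : limit inequality for vectors of W
  have hyψ : Tendsto (fun j => y (ψ j)) atTop (nhds x) := hyx.comp hψ.tendsto_atTop
  have hVψ : Tendsto (fun j => Vn (ψ j)) atTop (nhds (X x)) := hVnw.comp hψ.tendsto_atTop
  have hclaimA : ∀ b ∈ W, ∀ τ : ℝ, 0 < τ →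
      ‖b‖ * ‖A (-τ) x (X x)‖ ≤ C * Real.exp (-lam * τ) * (‖A (-τ) x b‖ * ‖X x‖) := by
    intro b hbW τ hτ
    obtain ⟨b₀, hb₀⟩ := LinearMap.mem_range.1 hbW
    have hb₀' : Q b₀ = b := hb₀
    have hbj : Tendsto (fun j => Qn (ψ j) b₀) atTop (nhds b) := by
      rw [← hb₀']
      exact (happ.tendsto (Q, b₀)).comp (hQlim.prodMk_nhds tendsto_const_nhds)
    have hineq : ∀ j, ‖Qn (ψ j) b₀‖ * ‖A (-τ) (y (ψ j)) (Vn (ψ j))‖ ≤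
        C * Real.exp (-lam * τ) * (‖A (-τ) (y (ψ j)) (Qn (ψ j) b₀)‖ * ‖Vn (ψ j)‖) := by
      intro j
      have hzΛ : φ (-τ) (y (ψ j)) ∈ Λ := hΛmem _ (hyΛ _) _
      have he'' : A (-τ) (y (ψ j)) (Qn (ψ j) b₀) ∈ E (φ (-τ) (y (ψ j))) :=
        hEinv _ (hyΛ _) _ _ (hQmem _ _)
      have hw'' : A (-τ) (y (ψ j)) (Vn (ψ j)) ∈ F (φ (-τ) (y (ψ j))) :=
        hFinv _ (hyΛ _) _ _ (hVmem _)
      have hd := hdom _ hzΛ τ hτ _ he'' _ hw''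
      rwa [hinv2 τ (y (ψ j)) (Qn (ψ j) b₀), hinv2 τ (y (ψ j)) (Vn (ψ j))] at hd
    have hAτ : Tendsto (fun j => A (-τ) (y (ψ j))) atTop (nhds (A (-τ) x)) := by
      have hc : Continuous fun z : M => A (-τ) z :=
        hAc.comp (continuous_const.prodMk continuous_id)
      exact (hc.tendsto x).comp hyψ
    have h1 : Tendsto (fun j => A (-τ) (y (ψ j)) (Vn (ψ j))) atTop
        (nhds (A (-τ) x (X x))) :=
      (happ.tendsto (A (-τ) x, X x)).comp (hAτ.prodMk_nhds hVψ)
    have h2 : Tendsto (fun j => A (-τ) (y (ψ j)) (Qn (ψ j) b₀)) atTop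
        (nhds (A (-τ) x b)) :=
      (happ.tendsto (A (-τ) x, b)).comp (hAτ.prodMk_nhds hbj)
    exact le_of_tendsto_of_tendsto' (hbj.norm.mul h1.norm)
      (tendsto_const_nhds.mul (h2.norm.mul hVψ.norm)) hineq
  -- W is transverse to F x
  have hWF : W ⊓ F x = ⊥ := by
    rw [Submodule.eq_bot_iff]
    intro b hb
    obtain ⟨hbW, hbF⟩ := Submodule.mem_inf.1 hb
    by_contra hbne
    obtain ⟨τ, hτpos, hτ1, hτ2⟩ : ∃ τ : ℝ, 0 < τ ∧
        C * Real.exp (-lam * τ) * ‖v‖ ≤ ‖u‖ / 2 ∧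
        2 * (C * Real.exp (-lam * τ)) * (C * Real.exp (-lam * τ)) * ‖X x‖ < ‖u‖ := by
      have hev1 : ∀ᶠ τ : ℝ in atTop, C * Real.exp (-lam * τ) * ‖v‖ ≤ ‖u‖ / 2 := by
        have h := (tendsto_Cexp C lam hlam).mul_const ‖v‖
        rw [zero_mul] at h
        exact h.eventually_le_const (by positivity)
      have hev2 : ∀ᶠ τ : ℝ in atTop,
          2 * (C * Real.exp (-lam * τ)) * (C * Real.exp (-lam * τ)) * ‖X x‖ < ‖u‖ := by
        have h := (((tendsto_Cexp C lam hlam).const_mul 2).mul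
          (tendsto_Cexp C lam hlam)).mul_const ‖X x‖
        simp only [mul_zero, zero_mul] at h
        exact h.eventually_lt_const hupos
      obtain ⟨τ, ⟨h1, h2⟩, h3⟩ := ((hev1.and hev2).and (eventually_gt_atTop 0)).exists
      exact ⟨τ, h3, h1, h2⟩
    have hC2 := hCw τ hτpos hτ1
    have hA1 := hclaimA b hbW τ hτpos
    have hB1 := hB b hbF τ hτpos
    have hwpos : 0 < ‖A (-τ) x (X x)‖ := norm_pos_iff.2 (hAnz _ _ _ hreg)
    have hbpos : 0 < ‖b‖ := norm_pos_iff.2 hbne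
    have hepos : (0:ℝ) < C * Real.exp (-lam * τ) := by positivity
    have P1 := mul_le_mul_of_nonneg_left hA1 hupos.le
    have P2 := mul_le_mul_of_nonneg_left hB1
      (mul_nonneg hepos.le (norm_nonneg (X x)))
    have P3 := mul_le_mul_of_nonneg_left hC2
      (by positivity : (0:ℝ) ≤ (C * Real.exp (-lam * τ)) * (C * Real.exp (-lam * τ)) * ‖X x‖ * ‖b‖)
    have P4 := mul_lt_mul_of_pos_left hτ2 (mul_pos hwpos hbpos)
    nlinarith [P1, P2, P3, P4]
  -- W ⊔ F x = ⊤
  have hWtop : W ⊔ F x = ⊤ := by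
    apply Submodule.eq_top_of_finrank_eq
    have h := Submodule.finrank_sup_add_finrank_inf_eq W (F x)
    rw [hWF] at h
    simp only [finrank_bot, add_zero] at h
    rw [h, hWrank, hdimV]
  -- decompose X x in W ⊔ F x and conclude
  have hXxW : X x ∈ W ⊔ F x := by rw [hWtop]; trivial
  rw [Submodule.mem_sup] at hXxW
  obtain ⟨ut, hutW, vt, hvtF, hsum⟩ := hXxW
  rcases eq_or_ne ut 0 with rfl | hutne
  · have hwF : X x ∈ F x := by rw [← hsum, zero_add]; exact hvtF
    have huF : u ∈ F x := by
      have h1 : u = X x - v := by rw [← huv]; abel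
      rw [h1]
      exact Submodule.sub_mem _ hwF hv
    have h2 : u ∈ E x ⊓ F x := Submodule.mem_inf.2 ⟨hu, huF⟩
    rw [hinfx] at h2
    exact hune ((Submodule.mem_bot ℝ).1 h2)
  · have hfin : ∀ᶠ τ : ℝ in atTop, ‖ut‖ ≤ 2 * (C * Real.exp (-lam * τ)) * ‖X x‖ := by
      have hev1 : ∀ᶠ τ : ℝ in atTop, C * Real.exp (-lam * τ) * ‖v‖ ≤ ‖u‖ / 2 := by
        have h := (tendsto_Cexp C lam hlam).mul_const ‖v‖
        rw [zero_mul] at h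
        exact h.eventually_le_const (by positivity)
      have hev2 : ∀ᶠ τ : ℝ in atTop, 2 * (C * Real.exp (-lam * τ)) * ‖vt‖ ≤ ‖u‖ := by
        have h := ((tendsto_Cexp C lam hlam).const_mul 2).mul_const ‖vt‖
        simp only [mul_zero, zero_mul] at h
        exact h.eventually_le_const hupos
      filter_upwards [eventually_gt_atTop 0, hev1, hev2] with τ hτpos h1 h2
      have hC2 := hCw τ hτpos h1
      have hA1 := hclaimA ut hutW τ hτpos
      have hB1 := hB vt hvtF τ hτpos
      have hwpos : 0 < ‖A (-τ) x (X x)‖ := norm_pos_iff.2 (hAnz _ _ _ hreg)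
      have hepos : (0:ℝ) < C * Real.exp (-lam * τ) := by positivity
      have hsub : A (-τ) x ut = A (-τ) x (X x) - A (-τ) x vt := by
        rw [← hsum, map_add]; abel
      have h5 : ‖A (-τ) x ut‖ ≤ ‖A (-τ) x (X x)‖ + ‖A (-τ) x vt‖ := by
        rw [hsub]; exact norm_sub_le _ _
      have h6 : ‖A (-τ) x vt‖ ≤ ‖A (-τ) x (X x)‖ := by
        nlinarith [hB1,
          mul_le_mul_of_nonneg_left hC2
            (mul_nonneg hepos.le (norm_nonneg vt)),
          mul_le_mul_of_nonneg_right h2 hwpos.le, hupos]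
      have h7 : ‖A (-τ) x ut‖ ≤ 2 * ‖A (-τ) x (X x)‖ := by linarith
      have P := mul_le_mul_of_nonneg_left h7
        (mul_nonneg hepos.le (norm_nonneg (X x)))
      nlinarith [hA1, P, hwpos]
    have h0 : Tendsto (fun τ : ℝ => 2 * (C * Real.exp (-lam * τ)) * ‖X x‖) atTop (nhds 0) := by
      have h := ((tendsto_Cexp C lam hlam).const_mul 2).mul_const ‖X x‖
      simpa using h
    have hle : ‖ut‖ ≤ 0 := ge_of_tendsto h0 hfin
    exact hutne (norm_le_zero_iff.1 hle)
end

section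
/- Let Λ be a compact invariant set of a C¹ vector field X with a dominated splitting T_Λ M = E ⊕ F with respect to the tangent flow, and suppose X(x) ∈ F(x) for all x ∈ Λ. If x ∈ Λ is a point whose ω-limit set contains a regular point y (X(y) ≠ 0), then there exists t_x > 0 with ‖Φ_{t_x}|_{E(x)}‖ < 1. -/
open Set Metric Filter Module

variable {M : Type*} [MetricSpace M]
variable {V : Type*} [NormedAddCommGroup V] [NormedSpace ℝ V]

/-! Taking `v = X x` in the domination inequality and using the invariance of `X` gives
`‖Φ_t|_{E(x)}‖ ≤ C e^{-λt} ‖X(φ_t x)‖ / ‖X x‖`. Along the times `tₙ` the numerator converges to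
`‖X y‖`, and `X x ≠ 0` because `X y ≠ 0`, so the bound eventually drops below `1`. -/

omit [MetricSpace M] in
theorem DominatedOn.exists_norm_apply_le {φ : ℝ → M → M} {A : ℝ → M → V →L[ℝ] V}
    {Λ : Set M} {E F : M → Submodule ℝ V} (hEF : DominatedOn φ A Λ E F) :
    ∃ C lam : ℝ, 0 < lam ∧ ∀ x ∈ Λ, ∀ t > 0, ∀ u ∈ E x, ∀ v ∈ F x, v ≠ 0 →
      ‖A t x u‖ ≤ C * Real.exp (-lam * t) * (‖A t x v‖ / ‖v‖) * ‖u‖ := by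
  obtain ⟨-, -, -, C, -, lam, hlam, hdom⟩ := hEF
  refine ⟨C, lam, hlam, fun x hx t ht u hu v hv hv0 => ?_⟩
  have hv_pos : 0 < ‖v‖ := norm_pos_iff.mpr hv0
  rw [mul_div_assoc', div_mul_eq_mul_div, le_div_iff₀ hv_pos]
  linarith [hdom x hx t ht u hu v hv]

theorem ne_zero_of_tendsto_orbit {φ : ℝ → M → M} {A : ℝ → M → V →L[ℝ] V} {X : M → V}
    (hXinv : ∀ (x : M) (t : ℝ), A t x (X x) = X (φ t x)) (hXc : Continuous X)
    {ι : Type*} {l : Filter ι} [l.NeBot] {x y : M} {tn : ι → ℝ}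
    (hω : Tendsto (fun n => φ (tn n) x) l (nhds y)) (hy : X y ≠ 0) : X x ≠ 0 := by
  intro hx
  have hzero : ∀ n, X (φ (tn n) x) = 0 := fun n => by rw [← hXinv, hx, map_zero]
  exact hy (tendsto_nhds_unique ((hXc.tendsto y).comp hω) (by simp [Function.comp_def, hzero]))

theorem tendsto_exp_neg_mul_mul_nhds_zero {ι : Type*} {l : Filter ι} {tn g : ι → ℝ}
    {lam a : ℝ} (htn : Tendsto tn l atTop) (hlam : 0 < lam) (hg : Tendsto g l (nhds a)) :
    Tendsto (fun n => Real.exp (-lam * tn n) * g n) l (nhds 0) := by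
  have hexp : Tendsto (fun n => Real.exp (-lam * tn n)) l (nhds 0) := by
    simpa only [neg_mul, Function.comp_def] using
      Real.tendsto_exp_neg_atTop_nhds_zero.comp (htn.const_mul_atTop hlam)
  simpa using hexp.mul hg

theorem eventual_contraction_of_regular_omega_limit_general
    (φ : ℝ → M → M) (A : ℝ → M → V →L[ℝ] V)
    (X : M → V) (hXc : Continuous X)
    (hXinv : ∀ (x : M) (t : ℝ), A t x (X x) = X (φ t x))
    (Λ : Set M)
    (E F : M → Submodule ℝ V) (hEF : DominatedOn φ A Λ E F)
    (hXF : ∀ x ∈ Λ, X x ∈ F x)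
    (x : M) (hx : x ∈ Λ)
    (y : M) (tn : ℕ → ℝ) (htn : Tendsto tn atTop atTop)
    (hωy : Tendsto (fun n => φ (tn n) x) atTop (nhds y))
    (hyreg : X y ≠ 0) :
    ∃ t > (0 : ℝ), ∃ c < (1 : ℝ), ∀ u ∈ E x, ‖A t x u‖ ≤ c * ‖u‖ := by
  obtain ⟨C, lam, hlam, hdom⟩ := hEF.exists_norm_apply_le
  have hXx : X x ≠ 0 := ne_zero_of_tendsto_orbit hXinv hXc hωy hyreg
  have hrate : Tendsto (fun n => C * Real.exp (-lam * tn n) * (‖X (φ (tn n) x)‖ / ‖X x‖))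
      atTop (nhds 0) := by
    simpa [mul_assoc] using (tendsto_exp_neg_mul_mul_nhds_zero htn hlam
      (((hXc.tendsto y).comp hωy).norm.div_const ‖X x‖)).const_mul C
  obtain ⟨n, hlt, hpos⟩ :=
    ((hrate.eventually (gt_mem_nhds one_pos)).and (htn.eventually_gt_atTop 0)).exists
  refine ⟨tn n, hpos, _, hlt, fun u hu => ?_⟩
  simpa only [hXinv] using hdom x hx (tn n) hpos u hu (X x) (hXF x hx) hXx

/-- If `X(x) ∈ F(x)` on all of `Λ` and the ω-limit set of `x ∈ Λ` contains a regular
point `y`, then some time-`t` tangent map contracts `E(x)`: `‖Φ_{t_x}|_{E(x)}‖ < 1`. -/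
theorem eventual_contraction_of_regular_omega_limit [FiniteDimensional ℝ V]
    (φ : ℝ → M → M) (hφ : IsFlow φ) (A : ℝ → M → V →L[ℝ] V)
    (hA : IsCocycleOver φ A) (hAc : Continuous fun p : ℝ × M => A p.1 p.2)
    (X : M → V) (hXc : Continuous X)
    (hXinv : ∀ (x : M) (t : ℝ), A t x (X x) = X (φ t x))
    (Λ : Set M) (hΛc : IsCompact Λ) (hΛi : ∀ t : ℝ, φ t '' Λ = Λ)
    (E F : M → Submodule ℝ V) (hEF : DominatedOn φ A Λ E F)
    (hXF : ∀ x ∈ Λ, X x ∈ F x)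
    (x : M) (hx : x ∈ Λ)
    (y : M) (tn : ℕ → ℝ) (htn : Tendsto tn atTop atTop)
    (hωy : Tendsto (fun n => φ (tn n) x) atTop (nhds y))
    (hyreg : X y ≠ 0) :
    ∃ t > (0 : ℝ), ∃ c < (1 : ℝ), ∀ u ∈ E x, ‖A t x u‖ ≤ c * ‖u‖ :=
  eventual_contraction_of_regular_omega_limit_general φ A X hXc hXinv Λ E F hEF hXF x hx y tn htn
    hωy hyreg
end

section
/- Let Λ be a compact invariant set with a dominated splitting T_Λ M = E ⊕ F with respect to the tangent flow of a C¹ vector field X, and suppose X(x) ∈ F(x) for every x ∈ Λ. Then the normal bundle over Λ \ Sing(X) admits a dominated splitting of index dim E with respect to the linear Poincaré flow. -/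
/-!
The normal splitting is `Δˢ = π(E)`, `Δᵘ = F ∩ 𝒩`, where `π` is the orthogonal projection onto
`𝒩 = X^⊥`. The map `1 - π` takes values in `ℝ X ⊆ F`, and `Φ_t` carries `ℝ X(x)` to
`ℝ X(φ_t x)`, which the projection at `φ_t x` kills; so `ψ_t π = π Φ_t`, and on `Δᵘ` the flow `ψ_t`
agrees with `Φ_t` applied to a vector of `F` that is only longer. Hence the domination of `Φ_t`
passes to `ψ_t`, at the cost of the factor `‖e‖ / ‖π e‖` for `e ∈ E`. This factor is bounded
because the angle between `E` and `F` is bounded away from zero on `Λ`: for `T` with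
`C e^{-λT} ≤ 1/8`, domination at time `T` together with bounds on `Φ_{±T}` uniform over the
compact set `Λ` gives `‖e‖ ≤ 4K² ‖e - f‖` for `e ∈ E`, `f ∈ F`.
-/

open Set Metric Filter Module

variable {M : Type*} [MetricSpace M]
variable {V : Type*} [NormedAddCommGroup V] [NormedSpace ℝ V]

/-- The linear Poincaré flow: the orthogonal projection of the tangent flow to the
normal space of the vector field at `φ_t(x)`. -/
noncomputable def linPoincare {W : Type*} [NormedAddCommGroup W] [InnerProductSpace ℝ W]
    [FiniteDimensional ℝ W] (φ : ℝ → W → W) (A : ℝ → W → W →L[ℝ] W) (X : W → W)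
    (t : ℝ) (x : W) (v : W) : W :=
  (((ℝ ∙ X (φ t x))ᗮ).orthogonalProjectionOnto (A t x v) : W)

open Topology

theorem norm_le_mul_norm_sub_of_dominated {V' : Type*} [NormedAddCommGroup V'] [NormedSpace ℝ V']
    (L : V →L[ℝ] V') {K : ℝ} (hK : 1 ≤ K) (hL : ‖L‖ ≤ K)
    {e f : V} (hf : ‖f‖ ≤ K * ‖L f‖) (hdom : ‖L e‖ * ‖f‖ ≤ 1 / 8 * (‖e‖ * ‖L f‖)) :
    ‖e‖ ≤ 4 * K ^ 2 * ‖e - f‖ := by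
  have hsub : ‖e‖ - ‖f‖ ≤ ‖e - f‖ := norm_sub_norm_le e f
  have hK2 : 1 * ‖e - f‖ ≤ K ^ 2 * ‖e - f‖ := by gcongr; exact one_le_pow₀ hK
  rcases lt_or_ge ‖f‖ (‖e‖ / 2) with hsmall | hlarge
  · nlinarith [norm_nonneg (e - f)]
  rcases (norm_nonneg f).eq_or_lt with hf0 | hfpos
  · nlinarith [norm_nonneg (e - f)]
  have hLe : ‖L e‖ ≤ 1 / 4 * ‖L f‖ := by
    refine le_of_mul_le_mul_right ?_ hfpos
    nlinarith [norm_nonneg (L f)]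
  have hLdiff : ‖L f‖ - ‖L e‖ ≤ K * ‖e - f‖ :=
    calc ‖L f‖ - ‖L e‖ ≤ ‖L (e - f)‖ := by
          rw [map_sub, norm_sub_rev]; exact norm_sub_norm_le _ _
      _ ≤ ‖L‖ * ‖e - f‖ := L.le_opNorm _
      _ ≤ K * ‖e - f‖ := by gcongr
  nlinarith [norm_nonneg (e - f)]

theorem exists_pos_mul_exp_neg_le (C : ℝ) {lam ε : ℝ} (hlam : 0 < lam) (hε : 0 < ε) :
    ∃ T > 0, C * Real.exp (-lam * T) ≤ ε := by
  have hlim : Tendsto (fun T => C * Real.exp (-lam * T)) atTop (𝓝 0) := by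
    simpa using (Real.tendsto_exp_atBot.comp
      (tendsto_id.const_mul_atTop_of_neg (neg_neg_of_pos hlam))).const_mul C
  exact ((eventually_gt_atTop 0).and (hlim.eventually (ge_mem_nhds hε))).exists

section Dominated

variable {Ω : Type*} {φ : ℝ → Ω → Ω} {A : ℝ → Ω → V →L[ℝ] V}

theorem IsCocycleOver.apply_neg_apply (hA : IsCocycleOver φ A) (t : ℝ) (x : Ω) (v : V) :
    A (-t) (φ t x) (A t x v) = v := by
  have h := hA.2 (-t) t x
  rw [neg_add_cancel, hA.1] at h
  exact (congrArg (· v) h).symm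

theorem IsCocycleOver.norm_le_mul_norm_apply (hA : IsCocycleOver φ A) {Λ : Set Ω} {t K : ℝ}
    (hΛ : MapsTo (φ t) Λ Λ) (hK : ∀ y ∈ Λ, ‖A (-t) y‖ ≤ K) {x : Ω} (hx : x ∈ Λ) (v : V) :
    ‖v‖ ≤ K * ‖A t x v‖ :=
  calc ‖v‖ = ‖A (-t) (φ t x) (A t x v)‖ := by rw [hA.apply_neg_apply]
    _ ≤ ‖A (-t) (φ t x)‖ * ‖A t x v‖ := (A (-t) (φ t x)).le_opNorm _
    _ ≤ K * ‖A t x v‖ := by gcongr; exact hK _ (hΛ hx)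

theorem DominatedOn.exists_norm_le_mul_norm_sub [TopologicalSpace Ω] {Λ : Set Ω}
    {E F : Ω → Submodule ℝ V} (h : DominatedOn φ A Λ E F) (hA : IsCocycleOver φ A)
    (hAc : ∀ t, ContinuousOn (A t) Λ) (hΛc : IsCompact Λ) (hΛi : ∀ t, MapsTo (φ t) Λ Λ) :
    ∃ c > 0, ∀ x ∈ Λ, ∀ e ∈ E x, ∀ f ∈ F x, ‖e‖ ≤ c * ‖e - f‖ := by
  obtain ⟨-, -, -, C, -, lam, hlam, hdom⟩ := h
  obtain ⟨T, hT, hCT⟩ := exists_pos_mul_exp_neg_le C hlam (by norm_num : (0 : ℝ) < 1 / 8)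
  obtain ⟨K₁, hK₁⟩ := hΛc.exists_bound_of_continuousOn (hAc T)
  obtain ⟨K₂, hK₂⟩ := hΛc.exists_bound_of_continuousOn (hAc (-T))
  set K := max (max K₁ K₂) 1
  refine ⟨4 * K ^ 2, by positivity, fun x hx e he f hf => ?_⟩
  refine norm_le_mul_norm_sub_of_dominated (A T x) (le_max_right _ _)
    ((hK₁ x hx).trans ((le_max_left _ _).trans (le_max_left _ _)))
    (hA.norm_le_mul_norm_apply (hΛi T)
      (fun y hy => (hK₂ y hy).trans ((le_max_right _ _).trans (le_max_left _ _))) hx f) ?_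
  calc ‖A T x e‖ * ‖f‖ ≤ C * Real.exp (-lam * T) * (‖e‖ * ‖A T x f‖) := hdom x hx T hT e he f hf
    _ ≤ 1 / 8 * (‖e‖ * ‖A T x f‖) := by gcongr

end Dominated

namespace Submodule

variable {W : Type*} [NormedAddCommGroup W] [InnerProductSpace ℝ W]
  {K E F : Submodule ℝ W} [K.HasOrthogonalProjection]

theorem sub_starProjection_orthogonal_mem (v : W) : v - Kᗮ.starProjection v ∈ K := by
  rw [starProjection_orthogonal_val, sub_sub_cancel]
  exact K.starProjection_apply_mem v

theorem starProjection_orthogonal_mem_of_le (hKF : K ≤ F) {v : W} (hv : v ∈ F) :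
    Kᗮ.starProjection v ∈ F := by
  simpa using F.sub_mem hv (hKF (sub_starProjection_orthogonal_mem v))

theorem disjoint_map_starProjection_orthogonal (hEF : Disjoint E F) (hKF : K ≤ F) :
    Disjoint (E.map Kᗮ.starProjection.toLinearMap) F := by
  rw [disjoint_iff_inf_le]
  rintro _ ⟨⟨e, he, rfl⟩, hPe⟩
  have heF : e ∈ F := by
    simpa using F.add_mem hPe (hKF (sub_starProjection_orthogonal_mem e))
  simp [disjoint_def.mp hEF e he heF]

theorem map_starProjection_orthogonal_sup_inf (hEF : E ⊔ F = ⊤) (hKF : K ≤ F) :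
    E.map Kᗮ.starProjection.toLinearMap ⊔ F ⊓ Kᗮ = Kᗮ := by
  refine le_antisymm (sup_le ?_ inf_le_right) fun w hw => ?_
  · rintro _ ⟨e, -, rfl⟩
    exact Kᗮ.starProjection_apply_mem e
  obtain ⟨e, he, f, hf, rfl⟩ := mem_sup.mp (hEF ▸ mem_top : w ∈ E ⊔ F)
  rw [← starProjection_eq_self_iff.mpr hw, map_add]
  exact add_mem (mem_sup_left (mem_map_of_mem he))
    (mem_sup_right ⟨starProjection_orthogonal_mem_of_le hKF hf, Kᗮ.starProjection_apply_mem f⟩)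

theorem finrank_map_starProjection_orthogonal (hEF : Disjoint E F) (hKF : K ≤ F) :
    finrank ℝ (E.map Kᗮ.starProjection.toLinearMap) = finrank ℝ E := by
  have hinj : Function.Injective (Kᗮ.starProjection.toLinearMap ∘ₗ E.subtype) := by
    refine (injective_iff_map_eq_zero _).2 fun e he => ?_
    have heK : (e : W) - 0 ∈ K := he ▸ sub_starProjection_orthogonal_mem (K := K) (e : W)
    rw [sub_zero] at heK
    exact Subtype.ext (disjoint_def.mp hEF e e.2 (hKF heK))
  rw [← LinearMap.finrank_range_of_inj hinj, LinearMap.range_comp, range_subtype]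

end Submodule

section PoincareFlow

open Submodule

variable {W : Type*} [NormedAddCommGroup W] [InnerProductSpace ℝ W]
  {φ : ℝ → W → W} {A : ℝ → W → W →L[ℝ] W} {X : W → W} {t : ℝ} {x : W}

theorem apply_mem_span_singleton_of_apply_eq (hX : A t x (X x) = X (φ t x)) {w : W}
    (hw : w ∈ ℝ ∙ X x) :
    A t x w ∈ ℝ ∙ X (φ t x) := by
  obtain ⟨c, rfl⟩ := mem_span_singleton.mp hw
  rw [map_smul, hX]
  exact smul_mem _ c (mem_span_singleton_self _)

variable [FiniteDimensional ℝ W]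

theorem linPoincare_starProjection (hX : A t x (X x) = X (φ t x)) (v : W) :
    linPoincare φ A X t x ((ℝ ∙ X x)ᗮ.starProjection v) =
      (ℝ ∙ X (φ t x))ᗮ.starProjection (A t x v) := by
  have hker := starProjection_orthogonal_apply_eq_zero <|
    apply_mem_span_singleton_of_apply_eq hX (sub_starProjection_orthogonal_mem (K := ℝ ∙ X x) v)
  rw [map_sub, map_sub, sub_eq_zero] at hker
  exact hker.symm

theorem exists_linPoincare_eq_apply_sub_smul (hX : A t x (X x) = X (φ t x)) (v : W) :
    ∃ c : ℝ, linPoincare φ A X t x v = A t x (v - c • X x) := by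
  obtain ⟨c, hc⟩ := mem_span_singleton.mp
    (sub_starProjection_orthogonal_mem (K := ℝ ∙ X (φ t x)) (A t x v))
  refine ⟨c, ?_⟩
  rw [map_sub, map_smul, hX, hc, sub_sub_cancel]
  rfl

theorem norm_linPoincare_mul_norm_le (hX : A t x (X x) = X (φ t x)) {E F : Submodule ℝ W}
    (hXF : X x ∈ F) {c D : ℝ} (hD : 0 ≤ D)
    (hdom : ∀ e ∈ E, ∀ f ∈ F, ‖A t x e‖ * ‖f‖ ≤ D * (‖e‖ * ‖A t x f‖))
    (hangle : ∀ e ∈ E, ∀ f ∈ F, ‖e‖ ≤ c * ‖e - f‖) {e v : W} (he : e ∈ E)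
    (hv : v ∈ F ⊓ (ℝ ∙ X x)ᗮ) :
    ‖linPoincare φ A X t x ((ℝ ∙ X x)ᗮ.starProjection e)‖ * ‖v‖ ≤
      c * D * (‖(ℝ ∙ X x)ᗮ.starProjection e‖ * ‖linPoincare φ A X t x v‖) := by
  have hKF : (ℝ ∙ X x) ≤ F := (span_singleton_le_iff_mem _ _).mpr hXF
  obtain ⟨a, ha⟩ := exists_linPoincare_eq_apply_sub_smul hX v
  have hvF : v - a • X x ∈ F := F.sub_mem hv.1 (F.smul_mem a hXF)
  have hu : ‖linPoincare φ A X t x ((ℝ ∙ X x)ᗮ.starProjection e)‖ ≤ ‖A t x e‖ := by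
    rw [linPoincare_starProjection hX]
    exact norm_starProjection_apply_le _ _
  have hv' : ‖v‖ ≤ ‖v - a • X x‖ :=
    calc ‖v‖ = ‖(ℝ ∙ X x)ᗮ.starProjection (v - a • X x)‖ := by
          rw [map_sub, starProjection_eq_self_iff.mpr hv.2, starProjection_orthogonal_apply_eq_zero
            (smul_mem _ a (mem_span_singleton_self _)), sub_zero]
      _ ≤ ‖v - a • X x‖ := norm_starProjection_apply_le _ _
  have he' : ‖e‖ ≤ c * ‖(ℝ ∙ X x)ᗮ.starProjection e‖ := by
    simpa using hangle e he _ (hKF (sub_starProjection_orthogonal_mem e))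
  calc _ ≤ ‖A t x e‖ * ‖v - a • X x‖ := by gcongr
    _ ≤ D * (‖e‖ * ‖A t x (v - a • X x)‖) := hdom e he _ hvF
    _ ≤ D * (c * ‖(ℝ ∙ X x)ᗮ.starProjection e‖ * ‖A t x (v - a • X x)‖) := by gcongr
    _ = _ := by rw [ha]; ring

end PoincareFlow

theorem normal_dominated_of_tangent_dominated_general
    {W : Type*} [NormedAddCommGroup W] [InnerProductSpace ℝ W] [FiniteDimensional ℝ W]
    (φ : ℝ → W → W) (A : ℝ → W → W →L[ℝ] W)
    (hA : IsCocycleOver φ A) (hAc : Continuous fun p : ℝ × W => A p.1 p.2)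
    (X : W → W)
    (hXinv : ∀ (x : W) (t : ℝ), A t x (X x) = X (φ t x))
    (Λ : Set W) (hΛc : IsCompact Λ) (hΛi : ∀ t : ℝ, φ t '' Λ = Λ)
    (E F : W → Submodule ℝ W) (hEF : DominatedOn φ A Λ E F)
    (hXF : ∀ x ∈ Λ, X x ∈ F x) :
    ∃ Δs Δu : W → Submodule ℝ W,
      (∀ x ∈ Λ, X x ≠ 0 →
        Δs x ⊓ Δu x = ⊥ ∧ Δs x ⊔ Δu x = (ℝ ∙ X x)ᗮ ∧
        finrank ℝ (Δs x) = finrank ℝ (E x) ∧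
        (∀ t : ℝ, ∀ v ∈ Δs x, linPoincare φ A X t x v ∈ Δs (φ t x)) ∧
        (∀ t : ℝ, ∀ v ∈ Δu x, linPoincare φ A X t x v ∈ Δu (φ t x))) ∧
      ∃ C > (0 : ℝ), ∃ lam > (0 : ℝ), ∀ x ∈ Λ, X x ≠ 0 → ∀ t > (0 : ℝ),
        ∀ u ∈ Δs x, ∀ v ∈ Δu x,
          ‖linPoincare φ A X t x u‖ * ‖v‖ ≤
            C * Real.exp (-lam * t) * (‖u‖ * ‖linPoincare φ A X t x v‖) := by
  have hΛmaps : ∀ t, MapsTo (φ t) Λ Λ := fun t _ hx =>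
    (hΛi t).subset (mem_image_of_mem (φ t) hx)
  obtain ⟨c, hc, hangle⟩ := hEF.exists_norm_le_mul_norm_sub hA
    (fun t => (hAc.comp (Continuous.prodMk_right t)).continuousOn) hΛc hΛmaps
  obtain ⟨hsplit, hEinv, hFinv, C, hC, lam, hlam, hdom⟩ := hEF
  have hXF' : ∀ x ∈ Λ, (ℝ ∙ X x) ≤ F x := fun x hx =>
    (Submodule.span_singleton_le_iff_mem _ _).mpr (hXF x hx)
  refine ⟨fun x => (E x).map (ℝ ∙ X x)ᗮ.starProjection.toLinearMap,
    fun x => F x ⊓ (ℝ ∙ X x)ᗮ, fun x hx _ => ⟨?_, ?_, ?_, ?_, ?_⟩,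
    c * C, by positivity, lam, hlam, fun x hx _ t ht u hu v hv => ?_⟩
  · exact disjoint_iff.mp ((Submodule.disjoint_map_starProjection_orthogonal
      (disjoint_iff.mpr (hsplit x hx).1) (hXF' x hx)).mono_right inf_le_left)
  · exact Submodule.map_starProjection_orthogonal_sup_inf (hsplit x hx).2 (hXF' x hx)
  · exact Submodule.finrank_map_starProjection_orthogonal (disjoint_iff.mpr (hsplit x hx).1)
      (hXF' x hx)
  · rintro t _ ⟨e, he, rfl⟩
    rw [ContinuousLinearMap.coe_coe, linPoincare_starProjection (hXinv x t)]
    exact Submodule.mem_map_of_mem (hEinv x hx t e he)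
  · rintro t v ⟨hvF, -⟩
    exact ⟨Submodule.starProjection_orthogonal_mem_of_le (hXF' _ (hΛmaps t hx))
      (hFinv x hx t v hvF), Submodule.starProjection_apply_mem _ _⟩
  · obtain ⟨e, he, rfl⟩ := hu
    simpa only [ContinuousLinearMap.coe_coe, mul_assoc] using
      norm_linPoincare_mul_norm_le (hXinv x t) (hXF x hx) (by positivity)
        (fun e he f hf => hdom x hx t ht e he f hf) (hangle x hx) he hv

/-- If a compact invariant set `Λ` has a dominated splitting `E ⊕ F` for the tangent flow
with `X(x) ∈ F(x)` everywhere, then the normal bundle over `Λ \ Sing(X)` has a dominated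
splitting of index `dim E` for the linear Poincaré flow. -/
theorem normal_dominated_of_tangent_dominated
    {W : Type*} [NormedAddCommGroup W] [InnerProductSpace ℝ W] [FiniteDimensional ℝ W]
    (φ : ℝ → W → W) (hφ : IsFlow φ) (A : ℝ → W → W →L[ℝ] W)
    (hA : IsCocycleOver φ A) (hAc : Continuous fun p : ℝ × W => A p.1 p.2)
    (X : W → W) (hXc : Continuous X)
    (hXinv : ∀ (x : W) (t : ℝ), A t x (X x) = X (φ t x))
    (Λ : Set W) (hΛc : IsCompact Λ) (hΛi : ∀ t : ℝ, φ t '' Λ = Λ)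
    (E F : W → Submodule ℝ W) (hEF : DominatedOn φ A Λ E F)
    (hXF : ∀ x ∈ Λ, X x ∈ F x) :
    ∃ Δs Δu : W → Submodule ℝ W,
      (∀ x ∈ Λ, X x ≠ 0 →
        Δs x ⊓ Δu x = ⊥ ∧ Δs x ⊔ Δu x = (ℝ ∙ X x)ᗮ ∧
        finrank ℝ (Δs x) = finrank ℝ (E x) ∧
        (∀ t : ℝ, ∀ v ∈ Δs x, linPoincare φ A X t x v ∈ Δs (φ t x)) ∧
        (∀ t : ℝ, ∀ v ∈ Δu x, linPoincare φ A X t x v ∈ Δu (φ t x))) ∧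
      ∃ C > (0 : ℝ), ∃ lam > (0 : ℝ), ∀ x ∈ Λ, X x ≠ 0 → ∀ t > (0 : ℝ),
        ∀ u ∈ Δs x, ∀ v ∈ Δu x,
          ‖linPoincare φ A X t x u‖ * ‖v‖ ≤
            C * Real.exp (-lam * t) * (‖u‖ * ‖linPoincare φ A X t x v‖) :=
  normal_dominated_of_tangent_dominated_general φ A hA hAc X hXinv Λ hΛc hΛi E F hEF hXF
end

section
/- Let Λ be a compact invariant set of a C¹ vector field with a continuous invariant 2-dimensional subbundle F ⊂ T_Λ M, and let φ(x) = log|Det(Φ_T|_{F(x)})| for some fixed T > 0. If for every x ∈ Λ there exists n(x) ∈ ℕ with (1/n(x)) Σ_{i=0}^{n(x)−1} φ(φ_{iT}(x)) > 0, then F is sectionally (area) expanding along the time-T map: there exist C > 0 and λ > 0 such that |Det(Φ_{nT}|_{F(x)})| ≥ C e^{λ nT} for all x ∈ Λ and n ∈ ℕ. -/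
open Set Metric Filter Module

variable {M : Type*} [MetricSpace M]
variable {V : Type*} [NormedAddCommGroup V] [NormedSpace ℝ V]

/-- The area of the parallelogram spanned by two vectors of a real inner product space. -/
noncomputable def area {W : Type*} [NormedAddCommGroup W] [InnerProductSpace ℝ W]
    (u v : W) : ℝ :=
  Real.sqrt (‖u‖ ^ 2 * ‖v‖ ^ 2 - (inner ℝ u v : ℝ) ^ 2)

/-!
By the cocycle property, `log D_{nT}` is the Birkhoff sum `S_n` of `g = log D_T` along the
time-`T` map. Continuity and compactness upgrade "some `S_n(x) > 0` at every `x`" to "some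
`n ≤ N` with `S_n(x) ≥ ε` at every `x`". Cutting an orbit segment of length `m` into such good
blocks, plus a final block of length `≤ N` on which `g` is merely bounded below, gives
`S_m ≥ (ε / N) m - c`; exponentiating gives the claim.
-/

open Function Topology

section UniformBirkhoff

variable {X : Type*} {f : X → X} {g : X → ℝ} {s : Set X}

theorem mul_le_birkhoffSum (hfs : MapsTo f s s) {a : ℝ} (hga : ∀ x ∈ s, a ≤ g x) (n : ℕ)
    {x : X} (hx : x ∈ s) : n * a ≤ birkhoffSum f g n x := by
  simpa [birkhoffSum] using Finset.card_nsmul_le_sum (Finset.range n) (fun k => g (f^[k] x)) a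
    fun k _ => hga _ (hfs.iterate k hx)

theorem mul_sub_le_birkhoffSum (hfs : MapsTo f s s) {N : ℕ} {ε lam a : ℝ}
    (hlam : 0 ≤ lam) (hlamN : lam * N ≤ ε) (ha : a ≤ 0) (hga : ∀ x ∈ s, a ≤ g x)
    (hgood : ∀ x ∈ s, ∃ n, 1 ≤ n ∧ n ≤ N ∧ ε ≤ birkhoffSum f g n x) (m : ℕ) :
    ∀ x ∈ s, lam * m - (ε - N * a) ≤ birkhoffSum f g m x := by
  induction m using Nat.strong_induction_on with
  | _ m ih =>
    intro x hx
    by_cases hmN : m ≤ N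
    · have hmN' : (m : ℝ) ≤ N := by exact_mod_cast hmN
      have hlam_m : lam * m ≤ lam * N := mul_le_mul_of_nonneg_left hmN' hlam
      have hNa : N * a ≤ m * a := mul_le_mul_of_nonpos_right hmN' ha
      linarith [mul_le_birkhoffSum hfs hga m hx]
    · obtain ⟨n, hn, hnN, hεn⟩ := hgood x hx
      have hnm : n ≤ m := by omega
      have hrest := ih (m - n) (by omega) _ (hfs.iterate n hx)
      have hsplit := birkhoffSum_add f g n (m - n) x
      rw [Nat.add_sub_cancel' hnm] at hsplit
      rw [Nat.cast_sub hnm] at hrest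
      have hlam_n : lam * n ≤ lam * N := mul_le_mul_of_nonneg_left (by exact_mod_cast hnN) hlam
      linarith

variable [TopologicalSpace X]

theorem ContinuousOn.birkhoffSum (hf : ContinuousOn f s) (hfs : MapsTo f s s)
    (hg : ContinuousOn g s) (n : ℕ) : ContinuousOn (birkhoffSum f g n) s :=
  continuousOn_finsetSum _ fun i _ => hg.comp (hf.iterate hfs i) (hfs.iterate i)

theorem IsCompact.exists_uniform_birkhoffSum_pos (hs : IsCompact s) (hf : ContinuousOn f s)
    (hfs : MapsTo f s s) (hg : ContinuousOn g s)
    (hpos : ∀ x ∈ s, ∃ n, 1 ≤ n ∧ 0 < birkhoffSum f g n x) :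
    ∃ N > 0, ∃ ε > 0, ∀ x ∈ s, ∃ n, 1 ≤ n ∧ n ≤ N ∧ ε ≤ birkhoffSum f g n x := by
  refine hs.induction_on ⟨1, one_pos, 1, one_pos, by simp⟩ ?_ ?_ ?_
  · exact fun t u htu ⟨N, hN, ε, hε, h⟩ => ⟨N, hN, ε, hε, fun x hx => h x (htu hx)⟩
  · rintro t u ⟨N, hN, ε, hε, ht⟩ ⟨N', hN', ε', hε', hu⟩
    refine ⟨max N N', lt_max_of_lt_left hN, min ε ε', lt_min hε hε', ?_⟩
    rintro x (hx | hx)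
    · obtain ⟨n, hn, hnN, hεn⟩ := ht x hx
      exact ⟨n, hn, hnN.trans (le_max_left _ _), (min_le_left _ _).trans hεn⟩
    · obtain ⟨n, hn, hnN, hεn⟩ := hu x hx
      exact ⟨n, hn, hnN.trans (le_max_right _ _), (min_le_right _ _).trans hεn⟩
  · intro x hx
    obtain ⟨n, hn, hSn⟩ := hpos x hx
    have hnear : ∀ᶠ y in 𝓝[s] x, birkhoffSum f g n x / 2 < birkhoffSum f g n y :=
      (hf.birkhoffSum hfs hg n x hx).eventually (lt_mem_nhds (half_lt_self hSn))
    exact ⟨_, hnear, n, hn, _, half_pos hSn, fun y hy => ⟨n, hn, le_rfl, le_of_lt hy⟩⟩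

theorem IsCompact.exists_linear_le_birkhoffSum (hs : IsCompact s) (hf : ContinuousOn f s)
    (hfs : MapsTo f s s) (hg : ContinuousOn g s)
    (hpos : ∀ x ∈ s, ∃ n, 1 ≤ n ∧ 0 < birkhoffSum f g n x) :
    ∃ c : ℝ, ∃ lam > 0, ∀ x ∈ s, ∀ n : ℕ, lam * n - c ≤ birkhoffSum f g n x := by
  obtain ⟨N, hN, ε, hε, hgood⟩ := hs.exists_uniform_birkhoffSum_pos hf hfs hg hpos
  obtain ⟨a, ha⟩ := hs.bddBelow_image hg
  have hNpos : (0 : ℝ) < N := by exact_mod_cast hN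
  refine ⟨ε - N * min a 0, ε / N, div_pos hε hNpos, fun x hx n => ?_⟩
  exact mul_sub_le_birkhoffSum hfs (div_pos hε hNpos).le (div_mul_cancel₀ ε hNpos.ne').le
    (min_le_right a 0) (fun y hy => (min_le_left a 0).trans (ha (mem_image_of_mem g hy)))
    hgood n x hx

end UniformBirkhoff

theorem IsFlow.continuous_apply {φ : ℝ → M → M} (hφ : IsFlow φ) (t : ℝ) : Continuous (φ t) :=
  hφ.1.comp (continuous_const.prodMk continuous_id)

theorem IsFlow.iterate_apply {φ : ℝ → M → M} (hφ : IsFlow φ) (t : ℝ) (n : ℕ) (x : M) :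
    (φ t)^[n] x = φ (n * t) x := by
  induction n with
  | zero => simp [hφ.2.1]
  | succ n ih => rw [iterate_succ_apply', ih, ← hφ.2.2]; push_cast; ring_nf

theorem log_cocycle_eq_birkhoffSum {φ : ℝ → M → M} (hφ : IsFlow φ) {Λ : Set M}
    (hΛ : ∀ t, MapsTo (φ t) Λ Λ) {D : ℝ → M → ℝ} (hDpos : ∀ t, ∀ x ∈ Λ, 0 < D t x)
    (hDcoc : ∀ s t, ∀ x ∈ Λ, D (s + t) x = D s (φ t x) * D t x) (T : ℝ) (x : M)
    (hx : x ∈ Λ) (n : ℕ) :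
    Real.log (D (n * T) x) = birkhoffSum (φ T) (fun y => Real.log (D T y)) n x := by
  induction n with
  | zero =>
    have hD0 := hDcoc 0 0 x hx
    rw [add_zero, hφ.2.1] at hD0
    have hlogD0 := congrArg Real.log hD0
    rw [Real.log_mul (hDpos 0 x hx).ne' (hDpos 0 x hx).ne'] at hlogD0
    simp only [CharP.cast_eq_zero, zero_mul, birkhoffSum_zero]
    linarith
  | succ n ih =>
    have hcoc := hDcoc T (n * T) x hx
    rw [birkhoffSum_succ, ← ih, hφ.iterate_apply, Nat.cast_succ, add_mul, one_mul,
      add_comm, hcoc, Real.log_mul (hDpos T _ (hΛ _ hx)).ne' (hDpos _ x hx).ne', add_comm]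

theorem sectional_expansion_of_positive_birkhoff_sums_general
    (φ : ℝ → M → M) (hφ : IsFlow φ)
    (Λ : Set M) (hΛc : IsCompact Λ) (hΛi : ∀ t : ℝ, φ t '' Λ = Λ)
    (T : ℝ) (hT : 0 < T)
    (D : ℝ → M → ℝ) (hDpos : ∀ (t : ℝ), ∀ x ∈ Λ, 0 < D t x)
    (hDcoc : ∀ (s t : ℝ), ∀ x ∈ Λ, D (s + t) x = D s (φ t x) * D t x)
    (hDcont : ContinuousOn (fun x => D T x) Λ)
    (hpt : ∀ x ∈ Λ, ∃ n : ℕ, 1 ≤ n ∧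
      0 < ∑ i ∈ Finset.range n, Real.log (D T (φ (i * T) x))) :
    ∃ C > (0 : ℝ), ∃ lam > (0 : ℝ), ∀ x ∈ Λ, ∀ n : ℕ,
      C * Real.exp (lam * n * T) ≤ D (n * T) x := by
  have hmaps : ∀ t, MapsTo (φ t) Λ Λ := fun t x hx =>
    (hΛi t).subset (mem_image_of_mem (φ t) hx)
  have hlog := log_cocycle_eq_birkhoffSum hφ hmaps hDpos hDcoc T
  obtain ⟨c, lam, hlam, hc⟩ := hΛc.exists_linear_le_birkhoffSum
    (hφ.continuous_apply T).continuousOn (hmaps T) (hDcont.log fun x hx => (hDpos T x hx).ne')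
    (fun x hx => by simpa only [birkhoffSum, hφ.iterate_apply] using hpt x hx)
  refine ⟨Real.exp (-c), Real.exp_pos _, lam / T, div_pos hlam hT, fun x hx n => ?_⟩
  calc Real.exp (-c) * Real.exp (lam / T * n * T) = Real.exp (lam * n - c) := by
        rw [← Real.exp_add]; field_simp; ring_nf
    _ ≤ Real.exp (birkhoffSum (φ T) (fun y => Real.log (D T y)) n x) :=
        Real.exp_le_exp.mpr (hc x hx n)
    _ = D (n * T) x := by rw [← hlog x hx n, Real.exp_log (hDpos _ x hx)]

/-- Uniformization: if along the time-`T` map every point of the compact invariant set `Λ`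
has some positive Birkhoff sum of `φ(x) = log |Det(Φ_T|_{F(x)})|`, then `F` is sectionally
(area) expanding along the time-`T` map: `|Det(Φ_{nT}|_{F(x)})| ≥ C e^{λ n T}`. -/
theorem sectional_expansion_of_positive_birkhoff_sums
    {W : Type*} [NormedAddCommGroup W] [InnerProductSpace ℝ W] [FiniteDimensional ℝ W]
    (φ : ℝ → M → M) (hφ : IsFlow φ) (A : ℝ → M → W →L[ℝ] W)
    (hA : IsCocycleOver φ A) (hAc : Continuous fun p : ℝ × M => A p.1 p.2)
    (Λ : Set M) (hΛc : IsCompact Λ) (hΛi : ∀ t : ℝ, φ t '' Λ = Λ)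
    (F : M → Submodule ℝ W) (hFinv : InvariantBundle φ A Λ F)
    (hF2 : ∀ x ∈ Λ, finrank ℝ (F x) = 2)
    (T : ℝ) (hT : 0 < T)
    (D : ℝ → M → ℝ) (hDpos : ∀ (t : ℝ), ∀ x ∈ Λ, 0 < D t x)
    (hDcoc : ∀ (s t : ℝ), ∀ x ∈ Λ, D (s + t) x = D s (φ t x) * D t x)
    (hDet : ∀ (t : ℝ), ∀ x ∈ Λ, ∀ u ∈ F x, ∀ v ∈ F x,
      area (A t x u) (A t x v) = D t x * area u v)
    (hDcont : ContinuousOn (fun x => D T x) Λ)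
    (hpt : ∀ x ∈ Λ, ∃ n : ℕ, 1 ≤ n ∧
      0 < ∑ i ∈ Finset.range n, Real.log (D T (φ (i * T) x))) :
    ∃ C > (0 : ℝ), ∃ lam > (0 : ℝ), ∀ x ∈ Λ, ∀ n : ℕ,
      C * Real.exp (lam * n * T) ≤ D (n * T) x :=
  sectional_expansion_of_positive_birkhoff_sums_general φ hφ Λ hΛc hΛi T hT D hDpos hDcoc hDcont hpt
end
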